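/- arXiv:1201.0171 — 4 statements merged into one kernel-verified Lean document; each statement's English description precedes it below -/
import Mathlib

section
/- (Alternating Property, even indices) For every k ≥ 1 and every i with 0 ≤ i ≤ d-1, SG(2dk - 2i) = SG(2dk), i.e. the even-indexed values within each block (2dk-2d, 2dk] are all equal. -/
/-- mex of the two-element set {a, b}: the least natural number not in {a, b}. -/
def mex2 (a b : ℕ) : ℕ :=
  if 0 ≠ a ∧ 0 ≠ b then 0 else if 1 ≠ a ∧ 1 ≠ b then 1 else if 2 ≠ a ∧ 2 ≠ b then 2 else 3

/-- The Sprague–Grundy sequence of the game G_{1,2d}: SG d 1 = 0 and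
    SG d n = mex {SG d (n-1), SG d ⌈n/(2d)⌉} for n ≥ 2. -/
def SG (d : ℕ) : ℕ → ℕ
  | 0 => 0
  | 1 => 0
  | n + 2 => mex2 (SG d (n + 1)) (SG d ((n + 2 + (2 * d - 1)) / (2 * d)))
decreasing_by
  · omega
  · rcases Nat.eq_zero_or_pos d with h | h
    · simp [h]
    · have h2 : 0 < 2 * d := by omega
      rw [Nat.div_lt_iff_lt_mul h2]
      simp only [Nat.succ_eq_add_one]
      have h6 : (n + 1 + 1) * 2 ≤ (n + 1 + 1) * (2 * d) := Nat.mul_le_mul_left _ (by omega)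
      have h8 : 2 * (2 * d) ≤ (n + 1 + 1) * (2 * d) := Nat.mul_le_mul_right _ (by omega)
      omega

/-!
On a block `2d(k-1) < n ≤ 2dk` the division term of the recurrence is the constant `c = SG d k`,
so along the block `SG d` follows the map `x ↦ mex {x, c}`. On `{0, 1, 2} \ {c}` this map swaps
the two elements, so consecutive values alternate and `SG d` has period two inside the block.
-/

lemma mex2_le (a b : ℕ) : mex2 a b ≤ 2 := by
  unfold mex2; split_ifs <;> omega

lemma mex2_ne_right (a b : ℕ) : mex2 a b ≠ b := by
  unfold mex2; split_ifs <;> omega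

lemma mex2_mex2_of_ne {a c : ℕ} (ha : a ≤ 2) (hc : c ≤ 2) (h : a ≠ c) :
    mex2 (mex2 a c) c = a := by
  interval_cases a <;> interval_cases c <;> simp_all [mex2]

lemma SG_le (d n : ℕ) : SG d n ≤ 2 := by
  match n with
  | 0 => simp [SG]
  | 1 => simp [SG]
  | n + 2 => rw [SG]; exact mex2_le _ _

lemma SG_eq_mex2_of_mem_block {d k n : ℕ} (h1 : 2 * d * k < n + 2 * d)
    (h2 : n ≤ 2 * d * k) (hn : 2 ≤ n) :
    SG d n = mex2 (SG d (n - 1)) (SG d k) := by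
  obtain ⟨m, rfl⟩ : ∃ m, n = m + 2 := ⟨n - 2, by omega⟩
  have hd : 0 < d := Nat.pos_of_ne_zero (by rintro rfl; simp at h2)
  have hceil : (m + 2 + (2 * d - 1)) / (2 * d) = k := by
    apply Nat.div_eq_of_lt_le <;> simp only [add_mul, one_mul, mul_comm k] <;> omega
  rw [SG, hceil]
  rfl

lemma SG_add_two_eq_of_mem_block {d k m : ℕ} (h1 : 2 * d * k + 2 ≤ m + 2 * d)
    (h2 : m + 2 ≤ 2 * d * k) :
    SG d (m + 2) = SG d m := by
  have hk : 0 < k := Nat.pos_of_ne_zero (by rintro rfl; simp at h2)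
  have hdk : 2 * d ≤ 2 * d * k := Nat.le_mul_of_pos_right _ hk
  have e0 : SG d m = mex2 (SG d (m - 1)) (SG d k) :=
    SG_eq_mex2_of_mem_block (by omega) (by omega) (by omega)
  have e1 : SG d (m + 1) = mex2 (SG d m) (SG d k) :=
    SG_eq_mex2_of_mem_block (n := m + 1) (by omega) (by omega) (by omega)
  have e2 : SG d (m + 2) = mex2 (SG d (m + 1)) (SG d k) :=
    SG_eq_mex2_of_mem_block (by omega) (by omega) (by omega)
  rw [e2, e1]
  exact mex2_mex2_of_ne (SG_le d m) (SG_le d k) (e0 ▸ mex2_ne_right _ _)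

theorem stmt_1_general (d : ℕ) (k : ℕ) (hk : 1 ≤ k) (i : ℕ) (hi : i ≤ d - 1) :
    SG d (2 * d * k - 2 * i) = SG d (2 * d * k) := by
  have hdk : 2 * d ≤ 2 * d * k := Nat.le_mul_of_pos_right _ hk
  induction i with
  | zero => rfl
  | succ i ih =>
    rw [← ih (by omega), ← SG_add_two_eq_of_mem_block (k := k) (by omega) (by omega)]
    congr 1
    omega

theorem stmt_1 (d : ℕ) (hd : 1 ≤ d) (k : ℕ) (hk : 1 ≤ k) (i : ℕ) (hi : i ≤ d - 1) :
    SG d (2 * d * k - 2 * i) = SG d (2 * d * k) :=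
  stmt_1_general d k hk i hi
end

section
/- Within each block, odd- and even-indexed SG values differ: for every k ≥ 1, SG(2dk) ≠ SG(2dk - 1). -/
theorem mex2_ne_left (a b : ℕ) : mex2 a b ≠ a := by
  unfold mex2
  split_ifs <;> omega

theorem SG_add_two (d n : ℕ) :
    SG d (n + 2) = mex2 (SG d (n + 1)) (SG d ((n + 2 + (2 * d - 1)) / (2 * d))) := by
  rw [SG]

theorem SG_succ_ne {d n : ℕ} (hn : 1 ≤ n) : SG d (n + 1) ≠ SG d n := by
  obtain ⟨m, rfl⟩ : ∃ m, n = m + 1 := ⟨n - 1, by omega⟩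
  rw [SG_add_two]
  exact mex2_ne_left _ _

theorem stmt_3 (d : ℕ) (hd : 1 ≤ d) (k : ℕ) (hk : 1 ≤ k) :
    SG d (2 * d * k) ≠ SG d (2 * d * k - 1) := by
  have hpos : 2 ≤ 2 * d * k := by nlinarith
  have hsucc : 2 * d * k - 1 + 1 = 2 * d * k := by omega
  simpa only [hsucc] using SG_succ_ne (d := d) (show 1 ≤ 2 * d * k - 1 by omega)
end

section
/- For d = 1 (the subtract-1-or-divide-by-2 game): SG(n) = 0 if and only if, writing the binary expansion of n with least significant digit first, either n ≡ 3 (mod 4), or the first digit of n is 1 and the maximal block of 0-digits immediately following that first 1 has even length and is followed by a 1. -/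
/-!
Write `v` for the `2`-adic valuation. By strong induction, `SG 1 (m + 1) = 0` exactly when `m = 0`
or `v m` is odd, the recursion being `SG 1 (m + 2) = mex {SG 1 (m + 1), SG 1 ((m + 1) / 2 + 1)}`.
If `m + 1 = 2k`, then `m` is odd, so the first option is nonzero, and `v (2k) = v k + 1` makes the
second one nonzero exactly when `v (m + 1)` is odd. If `m + 1 = 2k + 1`, then `v (2k) = v k + 1`,
so one of the two options vanishes. Finally `v (n - 1) = k + 1` says that the binary digits of
`n - 1` at positions `0, …, k` vanish and the one at `k + 1` is `1`; for odd `n` these agree with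
the digits of `n` at all positions `≥ 1`.
-/

lemma mex2_eq_zero_iff {a b : ℕ} : mex2 a b = 0 ↔ a ≠ 0 ∧ b ≠ 0 := by
  unfold mex2
  split_ifs with h <;> simp only [ne_eq, true_iff, false_iff] <;> omega

lemma SG_one_add_two (m : ℕ) :
    SG 1 (m + 2) = mex2 (SG 1 (m + 1)) (SG 1 ((m + 1) / 2 + 1)) := by
  rw [SG]
  congr 2
  omega

lemma padicValNat_two_two_mul {k : ℕ} (hk : k ≠ 0) :
    padicValNat 2 (2 * k) = padicValNat 2 k + 1 := by
  rw [padicValNat.mul two_ne_zero hk, padicValNat_self, add_comm]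

lemma SG_one_succ_eq_zero_iff (m : ℕ) :
    SG 1 (m + 1) = 0 ↔ m = 0 ∨ Odd (padicValNat 2 m) := by
  induction m using Nat.strong_induction_on with
  | _ m ih =>
    rcases m with _ | m
    · simp [SG]
    rw [SG_one_add_two, mex2_eq_zero_iff, ne_eq, ne_eq, ih m (by omega),
      ih ((m + 1) / 2) (by omega)]
    obtain ⟨k, hk | hk⟩ := Nat.even_or_odd' (m + 1)
    · have hk0 : k ≠ 0 := by omega
      have hm : padicValNat 2 m = 0 := padicValNat.eq_zero_of_not_dvd (by omega)
      rw [hk, show 2 * k / 2 = k by omega, padicValNat_two_two_mul hk0, Nat.odd_add_one, hm]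
      simp [hk0, show m ≠ 0 by omega]
    · have hodd : padicValNat 2 (2 * k + 1) = 0 := padicValNat.eq_zero_of_not_dvd (by omega)
      rw [hk, show m = 2 * k by omega, show (2 * k + 1) / 2 = k by omega, hodd]
      rcases eq_or_ne k 0 with rfl | hk0
      · simp
      · rw [padicValNat_two_two_mul hk0, Nat.odd_add_one]
        tauto

lemma two_pow_dvd_iff_forall_div_pow_mod_two_eq_zero {m k : ℕ} :
    2 ^ k ∣ m ↔ ∀ i < k, m / 2 ^ i % 2 = 0 := by
  induction k with
  | zero => simp
  | succ k ih =>
    rw [pow_succ, Nat.forall_lt_succ_right, ← ih]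
    constructor
    · intro h
      have hk : 2 ^ k ∣ m := dvd_of_mul_right_dvd h
      exact ⟨hk, Nat.mod_eq_zero_of_dvd ((Nat.dvd_div_iff_mul_dvd hk).2 h)⟩
    · rintro ⟨hk, hdigit⟩
      exact (Nat.dvd_div_iff_mul_dvd hk).1 (Nat.dvd_of_mod_eq_zero hdigit)

lemma padicValNat_two_eq_iff {m k : ℕ} (hm : m ≠ 0) :
    padicValNat 2 m = k ↔ 2 ^ k ∣ m ∧ m / 2 ^ k % 2 = 1 := by
  have hval : padicValNat 2 m = k ↔ 2 ^ k ∣ m ∧ ¬2 ^ (k + 1) ∣ m := by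
    rw [padicValNat_dvd_iff_le hm, padicValNat_dvd_iff_le hm]
    omega
  rw [hval, pow_succ]
  refine and_congr_right fun hk => ?_
  rw [← Nat.dvd_div_iff_mul_dvd hk]
  omega

lemma odd_padicValNat_two_iff {m : ℕ} (hm : m ≠ 0) :
    Odd (padicValNat 2 m) ↔
      ∃ k, Even k ∧ (∀ j ≤ k, m / 2 ^ j % 2 = 0) ∧ m / 2 ^ (k + 1) % 2 = 1 := by
  constructor
  · rintro ⟨k, hk⟩
    obtain ⟨hdvd, hone⟩ := (padicValNat_two_eq_iff hm).1 hk
    exact ⟨2 * k, even_two_mul k,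
      fun j hj => two_pow_dvd_iff_forall_div_pow_mod_two_eq_zero.1 hdvd j (by omega), hone⟩
  · rintro ⟨k, hk, hzero, hone⟩
    have hdvd : 2 ^ (k + 1) ∣ m :=
      two_pow_dvd_iff_forall_div_pow_mod_two_eq_zero.2 fun i hi => hzero i (by omega)
    rw [(padicValNat_two_eq_iff hm).2 ⟨hdvd, hone⟩]
    exact hk.add_one

lemma succ_div_two_pow_of_even {m j : ℕ} (hm : Even m) (hj : j ≠ 0) :
    (m + 1) / 2 ^ j = m / 2 ^ j :=
  Nat.succ_div_of_not_dvd fun h => by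
    have := (dvd_pow_self 2 hj).trans h
    have := Nat.even_iff.1 hm
    omega

/-- For d = 1: SG(n) = 0 iff n ≡ 3 (mod 4), or (reading binary digits of n least
significant first) the first digit is 1, and the maximal block of 0-digits immediately
following it has even length k (the digits at positions 1,…,k are 0) and is followed by
a 1 (the digit at position k+1 is 1). -/
theorem stmt_6 (n : ℕ) (hn : 2 ≤ n) :
    SG 1 n = 0 ↔
      (n % 4 = 3 ∨
        (n % 2 = 1 ∧ ∃ k : ℕ, Even k ∧ (∀ j, 1 ≤ j → j ≤ k → n / 2 ^ j % 2 = 0) ∧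
          n / 2 ^ (k + 1) % 2 = 1)) := by
  obtain ⟨m, rfl⟩ : ∃ m, n = m + 1 := ⟨n - 1, by omega⟩
  have hm : m ≠ 0 := by omega
  rw [SG_one_succ_eq_zero_iff, or_iff_right hm, odd_padicValNat_two_iff hm]
  -- `n ≡ 3 (mod 4)` is the case `k = 0` of the second alternative.
  have h4 : (m + 1) % 4 = 3 → (m + 1) % 2 = 1 ∧ ∃ k : ℕ, Even k ∧
      (∀ j, 1 ≤ j → j ≤ k → (m + 1) / 2 ^ j % 2 = 0) ∧ (m + 1) / 2 ^ (k + 1) % 2 = 1 :=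
    fun h => ⟨by omega, 0, Even.zero, fun j _ _ => by omega, by rw [pow_one]; omega⟩
  rw [or_iff_right_of_imp h4]
  constructor
  · rintro ⟨k, hk, hzero, hone⟩
    have hm2 : Even m := Nat.even_iff.2 (by simpa using hzero 0 k.zero_le)
    refine ⟨by have := Nat.even_iff.1 hm2; omega, k, hk, fun j hj hjk => ?_, ?_⟩
    · rw [succ_div_two_pow_of_even hm2 (by omega)]
      exact hzero j hjk
    · rwa [succ_div_two_pow_of_even hm2 (by omega)]
  · rintro ⟨hodd, k, hk, hzero, hone⟩
    have hm2 : Even m := Nat.even_iff.2 (by omega)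
    refine ⟨k, hk, fun j hjk => ?_, ?_⟩
    · rcases eq_or_ne j 0 with rfl | hj
      · simpa using Nat.even_iff.1 hm2
      · rw [← succ_div_two_pow_of_even hm2 hj]
        exact hzero j (by omega) hjk
    · rwa [← succ_div_two_pow_of_even hm2 (by omega)]
end

section
/- (Persistence of holding) Let a, b ≥ 1 and g = gcd(a, b), and define SG by the game G_{a,b}: SG(n) = mex{SG(n-a) [if n > a], SG(⌈n/b⌉) [if ⌈n/b⌉ < n]} with terminal positions having SG value 0. If for some m with mg > a all values SG(mg), SG(mg-1), ..., SG(mg-g+1) are equal, then for every j ≥ 0, the values SG(mg + ja), SG(mg + ja - 1), ..., SG(mg + ja - g + 1) are all equal. -/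
/-!
Since `g = gcd a b` divides `b`, all positions `N - g + 1, …, N` of a block with `g ∣ N` have the
same ceiling `⌈n / b⌉`, while subtracting `a` maps this block onto the block ending at `N - a`.
So if `S` is constant on the block ending at `N - a`, every position of the block ending at `N`
sees the same set of values, hence has the same mex; induction on `j` finishes the proof.
-/

/-- mex of a finite set of naturals: the least natural number not in the set. -/
noncomputable def fmex (s : Finset ℕ) : ℕ := sInf {k : ℕ | k ∉ s}

/-- The positions reachable in one move of the game G_{a,b} from position n:
    n - a (if n > a, i.e. n - a ≥ 1), and ⌈n/b⌉ (if ⌈n/b⌉ ≠ n). -/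
def moves (a b n : ℕ) : Finset ℕ :=
  (if a < n then ({n - a} : Finset ℕ) else ∅) ∪
    (if (n + b - 1) / b ≠ n then ({(n + b - 1) / b} : Finset ℕ) else ∅)

lemma Nat.sub_one_sub_div_eq_of_dvd {g b n i : ℕ} (hgb : g ∣ b) (hgn : g ∣ n) (hi : i < g) :
    (n - 1 - i) / b = (n - 1) / b := by
  rcases Nat.eq_zero_or_pos b with rfl | hb
  · simp
  rcases Nat.eq_zero_or_pos n with rfl | hn
  · simp
  set q := (n - 1) / b
  have hqb : q * b ≤ n - 1 := Nat.div_mul_le_self (n - 1) b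
  -- `q * b < n` and both are multiples of `g`, so they are at least `g` apart.
  have hgap : g ≤ n - q * b :=
    Nat.le_of_dvd (by omega) (Nat.dvd_sub hgn (Dvd.dvd.mul_left hgb q))
  apply Nat.div_eq_of_lt_le (by omega)
  have : n - 1 < q * b + b := Nat.lt_div_mul_add hb
  rw [add_one_mul]
  omega

lemma ceil_div_sub_eq_of_dvd {g b n i : ℕ} (hgb : g ∣ b) (hgn : g ∣ n) (hi : i < g) :
    (n - i + b - 1) / b = (n + b - 1) / b := by
  rcases Nat.eq_zero_or_pos b with rfl | hb
  · simp
  rcases Nat.eq_zero_or_pos n with rfl | hn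
  · simp
  have hin : i < n := lt_of_lt_of_le hi (Nat.le_of_dvd hn hgn)
  rw [show n - i + b - 1 = n - 1 - i + b by omega, show n + b - 1 = n - 1 + b by omega,
    Nat.add_div_right _ hb, Nat.add_div_right _ hb, Nat.sub_one_sub_div_eq_of_dvd hgb hgn hi]

lemma ceil_div_lt_self {b n : ℕ} (hb : b ≠ 1) (hn : 2 ≤ n) : (n + b - 1) / b < n := by
  rcases Nat.eq_zero_or_pos b with rfl | hb0
  · rw [Nat.div_zero]; omega
  rw [Nat.div_lt_iff_lt_mul hb0]
  have : n * 2 ≤ n * b := Nat.mul_le_mul_left n (by omega)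
  have : 2 * b ≤ n * b := Nat.mul_le_mul_right b hn
  omega

lemma moves_eq_pair {a b n : ℕ} (hb : b ≠ 1) (ha : a < n) (hn : 2 ≤ n) :
    moves a b n = {n - a, (n + b - 1) / b} := by
  rw [moves, if_pos ha, if_pos (ceil_div_lt_self hb hn).ne]
  rfl

def ConstOnBlock (S : ℕ → ℕ) (g N : ℕ) : Prop :=
  ∀ i, i ≤ g - 1 → S (N - i) = S N

lemma ConstOnBlock.of_sub {a b g N : ℕ} {S : ℕ → ℕ}
    (hS : ∀ n, 1 ≤ n → S n = fmex ((moves a b n).image S))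
    (ha : 1 ≤ a) (hgb : g ∣ b) (hgN : g ∣ N) (hN : a + g ≤ N)
    (hprev : ConstOnBlock S g (N - a)) :
    ConstOnBlock S g N := by
  intro i hi
  rcases Nat.eq_zero_or_pos i with rfl | hi0
  · rfl
  have hb : b ≠ 1 := by
    rintro rfl
    have := Nat.eq_one_of_dvd_one hgb
    omega
  have hiN : a < N - i := by omega
  rw [hS (N - i) (by omega), hS N (by omega), moves_eq_pair hb hiN (by omega),
    moves_eq_pair hb (by omega) (by omega), Finset.image_insert, Finset.image_insert,
    Finset.image_singleton, Finset.image_singleton, show N - i - a = N - a - i by omega,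
    hprev i hi, ceil_div_sub_eq_of_dvd hgb hgN (by omega)]

theorem stmt_15_general (a b : ℕ) (ha : 1 ≤ a) (S : ℕ → ℕ)
    (hS : ∀ n, 1 ≤ n → S n = fmex ((moves a b n).image S))
    (m : ℕ) (hm : a < m * Nat.gcd a b)
    (hhold : ∀ i, i ≤ Nat.gcd a b - 1 → S (m * Nat.gcd a b - i) = S (m * Nat.gcd a b)) :
    ∀ j : ℕ, ∀ i, i ≤ Nat.gcd a b - 1 →
      S (m * Nat.gcd a b + j * a - i) = S (m * Nat.gcd a b + j * a) := by
  set g := Nat.gcd a b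
  have hm0 : 0 < m := Nat.pos_of_ne_zero (by rintro rfl; simp at hm)
  have hg : g ≤ m * g := Nat.le_mul_of_pos_left g hm0
  intro j
  induction j with
  | zero => simpa using hhold
  | succ j ih =>
    have hN : m * g + (j + 1) * a - a = m * g + j * a := by rw [add_one_mul]; omega
    refine ConstOnBlock.of_sub hS ha (Nat.gcd_dvd_right a b) ?_ ?_ (hN ▸ ih)
    · exact dvd_add (dvd_mul_left g m) (Dvd.dvd.mul_left (Nat.gcd_dvd_left a b) _)
    · rw [add_one_mul]; omega

/-- Persistence of holding in G_{a,b}. -/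
theorem stmt_15 (a b : ℕ) (ha : 1 ≤ a) (hb : 1 ≤ b) (S : ℕ → ℕ)
    (hS : ∀ n, 1 ≤ n → S n = fmex ((moves a b n).image S))
    (m : ℕ) (hm : a < m * Nat.gcd a b)
    (hhold : ∀ i, i ≤ Nat.gcd a b - 1 → S (m * Nat.gcd a b - i) = S (m * Nat.gcd a b)) :
    ∀ j : ℕ, ∀ i, i ≤ Nat.gcd a b - 1 →
      S (m * Nat.gcd a b + j * a - i) = S (m * Nat.gcd a b + j * a) :=
  stmt_15_general a b ha S hS m hm hhold
end
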